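/- Fix n ∈ ℕ and a smooth cutoff function β : ℝ → [0,1] with β ≡ 1 on (−∞,−1] and β ≡ 0 on [1,∞). For R ∈ ℝ define, for bounded continuous u, v : ℝ → ℝⁿ, the pregluing ⊕_R(u,v) := β·u(·+R/2) + (1−β)·v(·−R/2) and the antigluing ⊖_R(u,v) := (β−1)·u(·+R/2) + β·v(·−R/2). Then for every R ∈ ℝ the combined map ⊞_R := (⊕_R, ⊖_R) : BC(ℝ,ℝⁿ) × BC(ℝ,ℝⁿ) → BC(ℝ,ℝⁿ) × BC(ℝ,ℝⁿ) is a bounded linear bijection with bounded inverse (a Banach space isomorphism); indeed the pointwise coefficient matrix (β, 1−β; β−1, β) has determinant β² + (1−β)² ≥ 1/2 at every point of ℝ. In particular ker ⊖_R and ker ⊕_R are closed subspaces with BC(ℝ,ℝⁿ)² = ker ⊕_R ⊕ ker ⊖_R, i.e. ker ⊖_R is a closed complement of ker ⊕_R. -/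

import Mathlib

/-!
`⊞_R` is the composite of the shift isomorphism `(u, v) ↦ (u(· + R/2), v(· - R/2))` with
pointwise multiplication by the matrix `(a b; -b a)`, `a = β`, `b = 1 - β`. Such matrices
multiply like the complex numbers `a + ib`, so when `a² + b²` is bounded below by a positive
constant the multiplication operator has the inverse given by `(a - ib) / (a² + b²)`, whose
coefficients are again bounded and continuous. The two kernels are the preimages of the
coordinate axes under this isomorphism, hence closed and complementary.
-/

open BoundedContinuousFunction

/-- Bounded continuous functions `ℝ → ℝⁿ` with the sup norm. -/
abbrev BCn (n : ℕ) := BoundedContinuousFunction ℝ (EuclideanSpace ℝ (Fin n))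

/-- The kernel of the pregluing map `⊕_R`. -/
def kerPlus (n : ℕ) (β : ℝ → ℝ) (R : ℝ) : Set (BCn n × BCn n) :=
  {p | ∀ t : ℝ, β t • p.1 (t + R / 2) + (1 - β t) • p.2 (t - R / 2) = 0}

/-- The kernel of the antigluing map `⊖_R`. -/
def kerMinus (n : ℕ) (β : ℝ → ℝ) (R : ℝ) : Set (BCn n × BCn n) :=
  {p | ∀ t : ℝ, (β t - 1) • p.1 (t + R / 2) + β t • p.2 (t - R / 2) = 0}

namespace BoundedContinuousFunction
variable {X Y E : Type*} [TopologicalSpace X] [TopologicalSpace Y]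
  [NormedAddCommGroup E] [NormedSpace ℝ E]

variable (E) in
noncomputable def smulCLM (φ : X →ᵇ ℝ) : (X →ᵇ E) →L[ℝ] (X →ᵇ E) :=
  LinearMap.mkContinuous
    { toFun := (φ • ·)
      map_add' := fun u v => ext fun x => smul_add (φ x) (u x) (v x)
      map_smul' := fun r u => ext fun x => smul_comm (φ x) r (u x) }
    ‖φ‖ (norm_smul_le φ)

variable (E) in
noncomputable def rotation (a b : X →ᵇ ℝ) : (X →ᵇ E) × (X →ᵇ E) →L[ℝ] (X →ᵇ E) × (X →ᵇ E) :=
  ((smulCLM E a).coprod (smulCLM E b)).prod ((smulCLM E (-b)).coprod (smulCLM E a))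

theorem rotation_apply_fst (a b : X →ᵇ ℝ) (p : (X →ᵇ E) × (X →ᵇ E)) (x : X) :
    (rotation E a b p).1 x = a x • p.1 x + b x • p.2 x := rfl

theorem rotation_apply_snd (a b : X →ᵇ ℝ) (p : (X →ᵇ E) × (X →ᵇ E)) (x : X) :
    (rotation E a b p).2 x = -b x • p.1 x + a x • p.2 x := rfl

theorem rotation_comp_rotation (a b c e : X →ᵇ ℝ) :
    rotation E a b ∘L rotation E c e = rotation E (a * c - b * e) (a * e + b * c) := by
  refine ContinuousLinearMap.ext fun p => ?_
  refine Prod.ext (ext fun x => ?_) (ext fun x => ?_) <;>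
  · simp only [ContinuousLinearMap.comp_apply, rotation_apply_fst, rotation_apply_snd]
    simp only [coe_sub, coe_add, coe_mul, Pi.sub_apply, Pi.add_apply, Pi.mul_apply]
    module

theorem rotation_one_zero : rotation E (1 : X →ᵇ ℝ) 0 = ContinuousLinearMap.id ℝ _ := by
  refine ContinuousLinearMap.ext fun p => ?_
  refine Prod.ext (ext fun x => ?_) (ext fun x => ?_) <;>
    simp [rotation_apply_fst, rotation_apply_snd]

variable (E) in
noncomputable def compHomeomorph (φ : X ≃ₜ Y) : (Y →ᵇ E) ≃L[ℝ] (X →ᵇ E) :=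
  ContinuousLinearEquiv.equivOfInverse (compContinuousCLM E ℝ φ) (compContinuousCLM E ℝ φ.symm)
    (fun f => ext fun y => by simp) (fun f => ext fun x => by simp)

theorem compHomeomorph_apply (φ : X ≃ₜ Y) (f : Y →ᵇ E) (x : X) :
    compHomeomorph E φ f x = f (φ x) := rfl

theorem exists_inv_apply_of_le (f : X →ᵇ ℝ) {c : ℝ} (hc : 0 < c) (hf : ∀ x, c ≤ f x) :
    ∃ g : X →ᵇ ℝ, ∀ x, g x = (f x)⁻¹ := by
  have hpos x : 0 < f x := hc.trans_le (hf x)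
  refine ⟨ofNormedAddCommGroup (fun x => (f x)⁻¹) (f.continuous.inv₀ fun x => (hpos x).ne') c⁻¹
    fun x => ?_, fun x => rfl⟩
  rw [norm_inv, Real.norm_of_nonneg (hpos x).le]
  exact inv_anti₀ hc (hf x)

theorem exists_equiv_eq_rotation (a b : X →ᵇ ℝ) {c : ℝ} (hc : 0 < c)
    (hab : ∀ x, c ≤ a x ^ 2 + b x ^ 2) :
    ∃ Φ : ((X →ᵇ E) × (X →ᵇ E)) ≃L[ℝ] ((X →ᵇ E) × (X →ᵇ E)), ⇑Φ = rotation E a b := by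
  obtain ⟨dinv, hdinv⟩ := exists_inv_apply_of_le (a * a + b * b) hc fun x => by
    simpa [sq] using hab x
  have hre : a * (dinv * a) - b * -(dinv * b) = 1 := ext fun x => by
    have : a x ^ 2 + b x ^ 2 ≠ 0 := (hc.trans_le (hab x)).ne'
    simp only [coe_sub, coe_mul, coe_neg, Pi.sub_apply, Pi.mul_apply, Pi.neg_apply, hdinv,
      coe_add, Pi.add_apply, coe_one, Pi.one_apply]
    field_simp
    ring
  have him : a * -(dinv * b) + b * (dinv * a) = 0 := by ring
  refine ⟨.equivOfInverse' (rotation E a b) (rotation E (dinv * a) (-(dinv * b))) ?_ ?_, rfl⟩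
  · rw [rotation_comp_rotation, hre, him, rotation_one_zero]
  · rw [rotation_comp_rotation]
    convert rotation_one_zero using 2
    · linear_combination hre
    · linear_combination him

end BoundedContinuousFunction

namespace ContinuousLinearEquiv
variable {R M E F : Type*} [Semiring R] [AddCommMonoid M] [AddCommMonoid E] [AddCommMonoid F]
  [Module R M] [Module R E] [Module R F]
  [TopologicalSpace M] [TopologicalSpace E] [TopologicalSpace F]

theorem fst_eq_zero_inter_snd_eq_zero (Φ : M ≃L[R] E × F) :
    {p | (Φ p).1 = 0} ∩ {p | (Φ p).2 = 0} = {0} := by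
  ext p
  rw [Set.mem_inter_iff, Set.mem_singleton_iff, ← Φ.map_eq_zero_iff, Prod.ext_iff]
  exact Iff.rfl

theorem exists_add_fst_eq_zero_snd_eq_zero (Φ : M ≃L[R] E × F) (w : M) :
    ∃ a, (Φ a).1 = 0 ∧ ∃ b, (Φ b).2 = 0 ∧ w = a + b :=
  ⟨Φ.symm (0, (Φ w).2), by simp, Φ.symm ((Φ w).1, 0), by simp, by
    rw [← map_add, Prod.mk_add_mk, zero_add, add_zero, Prod.mk.eta, symm_apply_apply]⟩

end ContinuousLinearEquiv

theorem stmt18_general (n : ℕ) (β : ℝ → ℝ)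
    (hβsmooth : ContDiff ℝ (⊤ : ℕ∞) β)
    (hβrange : ∀ t, β t ∈ Set.Icc (0 : ℝ) 1) :
    (∀ t : ℝ, (1 : ℝ) / 2 ≤ β t ^ 2 + (1 - β t) ^ 2) ∧
    ∀ R : ℝ, ∃ Φ : (BCn n × BCn n) ≃L[ℝ] (BCn n × BCn n),
      (∀ (u v : BCn n) (t : ℝ),
        (Φ (u, v)).1 t = β t • u (t + R / 2) + (1 - β t) • v (t - R / 2)) ∧
      (∀ (u v : BCn n) (t : ℝ),
        (Φ (u, v)).2 t = (β t - 1) • u (t + R / 2) + β t • v (t - R / 2)) ∧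
      IsClosed (kerPlus n β R) ∧
      IsClosed (kerMinus n β R) ∧
      kerPlus n β R ∩ kerMinus n β R = {0} ∧
      (∀ w : BCn n × BCn n, ∃ a ∈ kerPlus n β R, ∃ b ∈ kerMinus n β R, w = a + b) := by
  have hdet t : (1 : ℝ) / 2 ≤ β t ^ 2 + (1 - β t) ^ 2 := by nlinarith [sq_nonneg (β t - 1 / 2)]
  refine ⟨hdet, fun R => ?_⟩
  obtain ⟨b, rfl⟩ : ∃ b : ℝ →ᵇ ℝ, ⇑b = β :=
    ⟨ofNormedAddCommGroup β hβsmooth.continuous 1 fun t => by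
      rw [Real.norm_eq_abs, abs_le]
      constructor <;> linarith [(hβrange t).1, (hβrange t).2], rfl⟩
  obtain ⟨M, hM⟩ := exists_equiv_eq_rotation (E := EuclideanSpace ℝ (Fin n)) b (1 - b)
    (by norm_num : (0 : ℝ) < 1 / 2) hdet
  let S : (BCn n × BCn n) ≃L[ℝ] (BCn n × BCn n) :=
    (compHomeomorph _ (Homeomorph.addRight (R / 2))).prodCongr
      (compHomeomorph _ (Homeomorph.subRight (R / 2)))
  let Φ := S.trans M
  have hΦ₁ (u v : BCn n) (t : ℝ) :
      (Φ (u, v)).1 t = b t • u (t + R / 2) + (1 - b t) • v (t - R / 2) := by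
    simp [Φ, S, hM, rotation_apply_fst, compHomeomorph_apply]
  have hΦ₂ (u v : BCn n) (t : ℝ) :
      (Φ (u, v)).2 t = (b t - 1) • u (t + R / 2) + b t • v (t - R / 2) := by
    simp [Φ, S, hM, rotation_apply_snd, compHomeomorph_apply]
  have hPlus : kerPlus n b R = {p | (Φ p).1 = 0} := Set.ext fun p => by
    simp [kerPlus, BoundedContinuousFunction.ext_iff, ← hΦ₁]
  have hMinus : kerMinus n b R = {p | (Φ p).2 = 0} := Set.ext fun p => by
    simp [kerMinus, BoundedContinuousFunction.ext_iff, ← hΦ₂]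
  refine ⟨Φ, hΦ₁, hΦ₂, ?_, ?_, ?_, fun w => ?_⟩
  · exact hPlus ▸ isClosed_eq (continuous_fst.comp Φ.continuous) continuous_const
  · exact hMinus ▸ isClosed_eq (continuous_snd.comp Φ.continuous) continuous_const
  · rw [hPlus, hMinus, Φ.fst_eq_zero_inter_snd_eq_zero]
  · rw [hPlus, hMinus]
    exact Φ.exists_add_fst_eq_zero_snd_eq_zero w

/-- **Statement 18**: let `β : ℝ → [0,1]` be a smooth cutoff with `β ≡ 1` on `(-∞,-1]`
and `β ≡ 0` on `[1,∞)`.  Then the pointwise coefficient matrix has determinant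
`β² + (1-β)² ≥ 1/2` everywhere and, for every `R ∈ ℝ`, the combined
pregluing/antigluing map `⊞_R = (⊕_R, ⊖_R)` is a continuous linear equivalence of
`BC(ℝ,ℝⁿ) × BC(ℝ,ℝⁿ)`; in particular the two kernels are closed subspaces with
`ker ⊕_R ∩ ker ⊖_R = {0}` and `ker ⊕_R + ker ⊖_R` everything, i.e. `ker ⊖_R` is a
closed complement of `ker ⊕_R`. -/
theorem stmt18 (n : ℕ) (β : ℝ → ℝ)
    (hβsmooth : ContDiff ℝ (⊤ : ℕ∞) β)
    (hβrange : ∀ t, β t ∈ Set.Icc (0 : ℝ) 1)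
    (hβone : ∀ t : ℝ, t ≤ -1 → β t = 1)
    (hβzero : ∀ t : ℝ, 1 ≤ t → β t = 0) :
    (∀ t : ℝ, (1 : ℝ) / 2 ≤ β t ^ 2 + (1 - β t) ^ 2) ∧
    ∀ R : ℝ, ∃ Φ : (BCn n × BCn n) ≃L[ℝ] (BCn n × BCn n),
      (∀ (u v : BCn n) (t : ℝ),
        (Φ (u, v)).1 t = β t • u (t + R / 2) + (1 - β t) • v (t - R / 2)) ∧
      (∀ (u v : BCn n) (t : ℝ),
        (Φ (u, v)).2 t = (β t - 1) • u (t + R / 2) + β t • v (t - R / 2)) ∧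
      IsClosed (kerPlus n β R) ∧
      IsClosed (kerMinus n β R) ∧
      kerPlus n β R ∩ kerMinus n β R = {0} ∧
      (∀ w : BCn n × BCn n, ∃ a ∈ kerPlus n β R, ∃ b ∈ kerMinus n β R, w = a + b) :=
  stmt18_general n β hβsmooth hβrange
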